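/- arXiv:1305.5057 — 3 statements merged into one kernel-verified Lean document; each statement's English description precedes it below -/
import Mathlib

section
/- Let G be a finite p-group and let Θ be a finite group acting on G by automorphisms, with the order of Θ coprime to p. Then the first nonabelian cohomology set H^1(Θ, G) is trivial, i.e., every 1-cocycle a: Θ → G (satisfying a(st) = a(s)·(s·a(t))) is of the form a(s) = g⁻¹·(s·g) for some g ∈ G. -/
/-!
Induct on `|G|`. If `N` is a normal subgroup preserved by `Θ` and `H¹` is trivial both on `N` and
on `G ⧸ N`, it is trivial on `G`: a cocycle which is a coboundary modulo `N`, once twisted by that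
coboundary, is a cocycle with values in `N`. For a nontrivial `p`-group take `N` the centre, which
is nontrivial, characteristic and abelian. On an abelian `A` of order prime to `m = |Θ|`,
multiplying the cocycle identity `a (s * t) = a s * s • a t` over all `t` gives
`a s ^ m = c * (s • c)⁻¹` with `c = ∏ t, a t`, and taking the unique `m`-th root of `c` exhibits
`a` as a coboundary.
-/

open Function

def MulAut.quotientCharacteristic {G : Type*} [Group G] (N : Subgroup G) [N.Characteristic] :
    MulAut G →* MulAut (G ⧸ N) where
  toFun e := QuotientGroup.congr N N e (Subgroup.characteristic_iff_map_eq.mp ‹_› e)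
  map_one' := MulEquiv.ext fun x => QuotientGroup.induction_on x fun _ => rfl
  map_mul' _ _ := MulEquiv.ext fun x => QuotientGroup.induction_on x fun _ => rfl

namespace NonabelianH1

variable {Θ G H : Type*} [Group Θ] [Group G] [Group H]

def IsCocycle (φ : Θ →* MulAut G) (a : Θ → G) : Prop :=
  ∀ s t, a (s * t) = a s * φ s (a t)

def IsCoboundary (φ : Θ →* MulAut G) (a : Θ → G) : Prop :=
  ∃ g : G, ∀ s, a s = g⁻¹ * φ s g

def H1Trivial (φ : Θ →* MulAut G) : Prop :=
  ∀ a : Θ → G, IsCocycle φ a → IsCoboundary φ a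

variable {φ : Θ →* MulAut G} {ψ : Θ →* MulAut H} {a : Θ → G}

theorem IsCocycle.twist (ha : IsCocycle φ a) (g : G) :
    IsCocycle φ (fun s => g * a s * (φ s g)⁻¹) := by
  intro s t
  simp only [ha s t, map_mul, MulAut.mul_apply, map_inv]
  group

theorem IsCoboundary.of_twist {g : G} (h : IsCoboundary φ (fun s => g * a s * (φ s g)⁻¹)) :
    IsCoboundary φ a := by
  obtain ⟨k, hk⟩ := h
  beta_reduce at hk
  refine ⟨k * g, fun s => ?_⟩
  calc a s = g⁻¹ * (g * a s * (φ s g)⁻¹) * φ s g := by group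
    _ = (k * g)⁻¹ * φ s (k * g) := by rw [hk s, map_mul]; group

theorem IsCocycle.map (f : G →* H) (hf : ∀ s x, f (φ s x) = ψ s (f x)) (ha : IsCocycle φ a) :
    IsCocycle ψ (f ∘ a) := by
  intro s t
  simp only [comp_apply, ha s t, map_mul, hf]

theorem IsCocycle.of_map {f : G →* H} (hf_inj : Injective f) (hf : ∀ s x, f (φ s x) = ψ s (f x))
    (ha : IsCocycle ψ (f ∘ a)) : IsCocycle φ a := by
  intro s t
  apply hf_inj
  simpa only [comp_apply, map_mul, hf] using ha s t

theorem IsCoboundary.map (f : G →* H) (hf : ∀ s x, f (φ s x) = ψ s (f x))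
    (ha : IsCoboundary φ a) : IsCoboundary ψ (f ∘ a) := by
  obtain ⟨g, hg⟩ := ha
  exact ⟨f g, fun s => by simp only [comp_apply, hg s, map_mul, map_inv, hf]⟩

theorem h1Trivial_of_coprime {A : Type*} [CommGroup A] [Finite A] [Fintype Θ]
    (hcop : (Nat.card A).Coprime (Fintype.card Θ)) (φ : Θ →* MulAut A) : H1Trivial φ := by
  intro a ha
  set c : A := ∏ t, a t
  have hpow : ∀ s, a s ^ Fintype.card Θ = c * (φ s c)⁻¹ := by
    intro s
    have hshift : ∏ t, a (s * t) = c := Fintype.prod_equiv (Equiv.mulLeft s) _ _ (fun _ => rfl)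
    simp only [ha s, Finset.prod_mul_distrib, Finset.prod_const, ← map_prod] at hshift
    rwa [eq_mul_inv_iff_mul_eq, ← Finset.card_univ]
  set d := (powCoprime hcop).symm c
  refine ⟨d⁻¹, fun s => (powCoprime hcop).injective ?_⟩
  have hd : d ^ Fintype.card Θ = c := (powCoprime hcop).apply_symm_apply c
  simp only [powCoprime_apply, hpow, map_inv, inv_inv, mul_pow, inv_pow, ← map_pow, hd]

theorem H1Trivial.of_characteristic (N : Subgroup G) [N.Characteristic]
    (hN : H1Trivial ((MulAut.characteristic N).comp φ))
    (hQ : H1Trivial ((MulAut.quotientCharacteristic N).comp φ)) : H1Trivial φ := by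
  intro a ha
  obtain ⟨q, hq⟩ := hQ _ (ha.map (QuotientGroup.mk' N) fun _ _ => rfl)
  obtain ⟨g, rfl⟩ := QuotientGroup.mk'_surjective N q
  have hmem : ∀ s, g * a s * (φ s g)⁻¹ ∈ N := by
    intro s
    have hqs : (a s : G ⧸ N) = (g : G ⧸ N)⁻¹ * (φ s g : G ⧸ N) := hq s
    rw [← QuotientGroup.eq_one_iff, QuotientGroup.mk_mul, QuotientGroup.mk_mul,
      QuotientGroup.mk_inv, hqs]
    group
  have hsub : ∀ s x, N.subtype ((MulAut.characteristic N).comp φ s x) = φ s (N.subtype x) :=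
    fun _ _ => rfl
  have hb : IsCocycle ((MulAut.characteristic N).comp φ) fun s => ⟨_, hmem s⟩ :=
    (ha.twist g).of_map N.subtype_injective hsub
  exact ((hN _ hb).map N.subtype hsub).of_twist

open scoped IsMulCommutative in
theorem h1Trivial_of_isPGroup {p : ℕ} [Fact p.Prime] [Finite G] [Fintype Θ] (hG : IsPGroup p G)
    (hcop : (Fintype.card Θ).Coprime p) (φ : Θ →* MulAut G) : H1Trivial φ := by
  revert ‹Group G› hG φ
  induction G using Finite.induction_subsingleton_or_nontrivial with
  | hbase => exact fun _ _ _ _ => ⟨1, fun s => Subsingleton.elim _ _⟩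
  | hstep G ih =>
    intro _ hG φ
    refine H1Trivial.of_characteristic (Subgroup.center G) ?_ ?_
    · obtain ⟨k, hk⟩ := IsPGroup.iff_card.mp (hG.to_subgroup (Subgroup.center G))
      exact h1Trivial_of_coprime (by rw [hk]; exact (hcop.pow_right k).symm) _
    · have hcard : Nat.card (G ⧸ Subgroup.center G) < Nat.card G := by
        rw [Subgroup.card_eq_card_quotient_mul_card_subgroup (Subgroup.center G)]
        apply lt_mul_of_one_lt_right Nat.card_pos
        exact (Subgroup.one_lt_card_iff_ne_bot _).mpr hG.bot_lt_center.ne'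
      exact ih _ hcard (hG.to_quotient _) _

end NonabelianH1

open NonabelianH1 in
/-- If `G` is a finite `p`-group and `Θ` a finite group of order coprime to `p`
acting on `G` by automorphisms, then `H¹(Θ, G)` is trivial: every 1-cocycle is a
coboundary. -/
theorem stmt0 {p : ℕ} [Fact p.Prime] (G Θ : Type) [Group G] [Fintype G]
    [Group Θ] [Fintype Θ]
    (hG : IsPGroup p G) (hcop : Nat.Coprime (Fintype.card Θ) p)
    (φ : Θ →* MulAut G) (a : Θ → G)
    (ha : ∀ s t : Θ, a (s * t) = a s * φ s (a t)) :
    ∃ g : G, ∀ s : Θ, a s = g⁻¹ * φ s g :=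
  h1Trivial_of_isPGroup hG hcop φ a ha
end

section
/- Let G be a profinite group (compact topological group that is an inverse limit of finite groups) and Θ a finite group acting on G by continuous automorphisms. Suppose that for every open normal Θ-stable subgroup N of G, the cohomology set H^1(Θ, G/N) is trivial. Then H^1(Θ, G) is trivial: every continuous 1-cocycle a: Θ → G is a coboundary. -/
/-! For an open normal `Θ`-stable subgroup `N`, the elements `g` with
`g * a s * (φ s g)⁻¹ ∈ N` for all `s` form a closed set, nonempty by hypothesis, and these
sets shrink as `N` does. Open normal `Θ`-stable subgroups are closed under finite
intersections, so by compactness of `G` some `g` lies in all of them. Every open normal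
subgroup contains the intersection of its finitely many `Θ`-translates, which is open, normal
and `Θ`-stable; since open normal subgroups of a profinite group intersect to `1`, so do the
`Θ`-stable ones, and `g * a s * (φ s g)⁻¹ = 1`. -/

variable {G Θ : Type*} [Group G] [Group Θ] (φ : Θ →* MulAut G)

namespace Subgroup

def IsStable (N : Subgroup G) : Prop := ∀ s : Θ, ∀ n ∈ N, φ s n ∈ N

theorem IsStable.inf {N M : Subgroup G} (hN : N.IsStable φ) (hM : M.IsStable φ) :
    (N ⊓ M).IsStable φ :=
  fun s n hn => ⟨hN s n hn.1, hM s n hn.2⟩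

theorem isStable_top : (⊤ : Subgroup G).IsStable φ := fun _ _ _ => trivial

def stableCore (N : Subgroup G) : Subgroup G := ⨅ t : Θ, N.comap (φ t).toMonoidHom

variable {φ}

theorem mem_stableCore {N : Subgroup G} {x : G} :
    x ∈ N.stableCore φ ↔ ∀ t : Θ, φ t x ∈ N :=
  mem_iInf

theorem stableCore_le (N : Subgroup G) : N.stableCore φ ≤ N := fun x hx => by
  simpa using mem_stableCore.1 hx 1

theorem isStable_stableCore (N : Subgroup G) : (N.stableCore φ).IsStable φ :=
  fun s n hn => mem_stableCore.2 fun t => by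
    simpa [MulAut.mul_apply] using mem_stableCore.1 hn (t * s)

instance normal_stableCore (N : Subgroup G) [N.Normal] : (N.stableCore φ).Normal :=
  normal_iInf_normal fun _ => inferInstance

theorem isOpen_stableCore [TopologicalSpace G] [Finite Θ] (hφ : ∀ s : Θ, Continuous (φ s))
    {N : Subgroup G} (hN : IsOpen (N : Set G)) : IsOpen (N.stableCore φ : Set G) := by
  rw [stableCore, coe_iInf]
  exact isOpen_iInter_of_finite fun t => hN.preimage (hφ t)

end Subgroup

section Profinite

variable [TopologicalSpace G] [IsTopologicalGroup G] [CompactSpace G] [TotallyDisconnectedSpace G]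
  [Finite Θ] {φ}

theorem exists_isStable_openNormalSubgroup_notMem (hφ : ∀ s : Θ, Continuous (φ s)) {x : G}
    (hx : x ≠ 1) : ∃ N : OpenNormalSubgroup G, (N : Subgroup G).IsStable φ ∧ x ∉ N := by
  obtain ⟨H, hH⟩ := ProfiniteGrp.exist_openNormalSubgroup_sub_open_nhds_of_one
    isClosed_singleton.isOpen_compl (Set.mem_compl_singleton_iff.2 hx.symm)
  let N : OpenNormalSubgroup G :=
    { toSubgroup := (H : Subgroup G).stableCore φ
      isOpen' := Subgroup.isOpen_stableCore hφ H.isOpen' }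
  exact ⟨N, Subgroup.isStable_stableCore _,
    fun hxN => hH (Subgroup.stableCore_le _ hxN) rfl⟩

theorem eq_one_of_forall_isStable_openNormalSubgroup (hφ : ∀ s : Θ, Continuous (φ s)) {x : G}
    (hx : ∀ N : OpenNormalSubgroup G, (N : Subgroup G).IsStable φ → x ∈ N) : x = 1 := by
  by_contra hx1
  obtain ⟨N, hN, hxN⟩ := exists_isStable_openNormalSubgroup_notMem hφ hx1
  exact hxN (hx N hN)

end Profinite

def trivializingSet (a : Θ → G) (N : Subgroup G) : Set G :=
  {g | ∀ s : Θ, g * a s * (φ s g)⁻¹ ∈ N}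

variable {φ}

theorem trivializingSet_mono (a : Θ → G) {N M : Subgroup G} (h : N ≤ M) :
    trivializingSet φ a N ⊆ trivializingSet φ a M :=
  fun _ hg s => h (hg s)

theorem isClosed_trivializingSet [TopologicalSpace G] [IsTopologicalGroup G]
    (hφ : ∀ s : Θ, Continuous (φ s)) (a : Θ → G) {N : Subgroup G}
    (hN : IsClosed (N : Set G)) :
    IsClosed (trivializingSet φ a N) := by
  simp only [trivializingSet, Set.ofPred_forall]
  exact isClosed_iInter fun s =>
    hN.preimage ((continuous_id.mul continuous_const).mul (hφ s).inv)

theorem exists_mem_trivializingSet_of_forall_nonempty [TopologicalSpace G] [IsTopologicalGroup G]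
    [CompactSpace G] (hφ : ∀ s : Θ, Continuous (φ s)) (a : Θ → G)
    (h : ∀ N : OpenNormalSubgroup G, (N : Subgroup G).IsStable φ →
      (trivializingSet φ a N).Nonempty) :
    ∃ g : G, ∀ N : OpenNormalSubgroup G, (N : Subgroup G).IsStable φ →
      g ∈ trivializingSet φ a N := by
  let K : {N : OpenNormalSubgroup G // (N : Subgroup G).IsStable φ} → Set G :=
    fun N => trivializingSet φ a N.1
  have : Nonempty {N : OpenNormalSubgroup G // (N : Subgroup G).IsStable φ} :=
    ⟨⟨{ toOpenSubgroup := ⊤, isNormal' := inferInstanceAs (⊤ : Subgroup G).Normal },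
      Subgroup.isStable_top φ⟩⟩
  have hK_closed : ∀ N, IsClosed (K N) := fun N =>
    isClosed_trivializingSet hφ a N.1.toOpenSubgroup.isClosed
  have hK_directed : Directed (· ⊇ ·) K := fun N M =>
    ⟨⟨N.1 ⊓ M.1, N.2.inf φ M.2⟩, trivializingSet_mono a inf_le_left,
      trivializingSet_mono a inf_le_right⟩
  obtain ⟨g, hg⟩ := IsCompact.nonempty_iInter_of_directed_nonempty_isCompact_isClosed K
    hK_directed (fun N => h N.1 N.2) (fun N => (hK_closed N).isCompact) hK_closed
  exact ⟨g, fun N hN => Set.mem_iInter.1 hg ⟨N, hN⟩⟩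

/-- Let `G` be a profinite group (compact, totally disconnected topological group)
and `Θ` a finite group acting on `G` by continuous automorphisms. If for every open
normal `Θ`-stable subgroup `N ⊴ G` the cohomology set `H¹(Θ, G/N)` is trivial
(i.e. every cocycle of `Θ` with values in `G` becomes a coboundary modulo `N`),
then `H¹(Θ, G)` is trivial: every 1-cocycle `a : Θ → G` is a coboundary. -/
theorem stmt2 (G Θ : Type) [Group G] [TopologicalSpace G] [IsTopologicalGroup G]
    [CompactSpace G] [TotallyDisconnectedSpace G]
    [Group Θ] [Finite Θ]
    (φ : Θ →* MulAut G) (hφ : ∀ s : Θ, Continuous (φ s))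
    (hH1 : ∀ N : Subgroup G, N.Normal → IsOpen (N : Set G) →
      (∀ s : Θ, ∀ n ∈ N, φ s n ∈ N) →
      ∀ a : Θ → G, (∀ s t : Θ, a (s * t) = a s * φ s (a t)) →
        ∃ g : G, ∀ s : Θ, g * a s * (φ s g)⁻¹ ∈ N)
    (a : Θ → G) (ha : ∀ s t : Θ, a (s * t) = a s * φ s (a t)) :
    ∃ g : G, ∀ s : Θ, a s = g⁻¹ * φ s g := by
  obtain ⟨g, hg⟩ := exists_mem_trivializingSet_of_forall_nonempty hφ a
    fun N hN => hH1 N N.isNormal' N.isOpen' hN a ha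
  refine ⟨g, fun s => ?_⟩
  have hg_one : g * a s * (φ s g)⁻¹ = 1 :=
    eq_one_of_forall_isStable_openNormalSubgroup hφ fun N hN => hg N hN s
  rw [eq_inv_mul_iff_mul_eq, ← mul_inv_eq_one, hg_one]
end

section
/- Let Γ = ℤ with the ℤ/2ℤ-action by negation (so the fixed subgroup Γ^Θ is trivial). Let M be the F₂-vector space {(x,y,z) ∈ F₂³ : x + y + z = 0}, with the generator of Γ acting by cyclic permutation of coordinates. Then the group cohomology H^n(ℤ, M) vanishes for all n ≥ 0, while H^0(Γ^Θ, M) = M has F₂-dimension 2; in particular dim H^0(ℤ, M) < dim H^0(Γ^Θ, M). -/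
/-!
A vector fixed by the cyclic shift is constant, `(c, c, c)`, and it lies in `M` only if
`3c = 0`, i.e. `c = 0` since `3` is a unit in `𝔽₂`. So `t - 1` is injective on `M`, hence
bijective as `M` is finite-dimensional, which kills `H⁰ = ker (t - 1)` and `H¹ = coker (t - 1)`.
Meanwhile `M` is the kernel of the nonzero functional `x + y + z` on `𝔽₂³`, so `dim M = 2`.
-/

/-- The 2-dimensional `𝔽₂`-subspace `M = {(x,y,z) ∈ 𝔽₂³ : x + y + z = 0}`. -/
def Msub : Submodule (ZMod 2) (Fin 3 → ZMod 2) where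
  carrier := {v | v 0 + v 1 + v 2 = 0}
  add_mem' := by
    intro a b ha hb
    simp only [Set.mem_setOf_eq, Pi.add_apply] at *
    linear_combination ha + hb
  zero_mem' := by simp
  smul_mem' := by
    intro c v hv
    simp only [Set.mem_setOf_eq, Pi.smul_apply] at *
    rw [← smul_add, ← smul_add, hv, smul_zero]

/-- The cyclic permutation `(x,y,z) ↦ (z,x,y)` as a linear endomorphism of `Msub`. -/
def tmap : Msub →ₗ[ZMod 2] Msub where
  toFun v := ⟨fun i => v.1 (i + 2), by
    have h := v.2
    simp only [Msub, Submodule.mem_mk, AddSubmonoid.mem_mk, AddSubsemigroup.mem_mk,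
      Set.mem_setOf_eq] at *
    show v.1 (0 + 2) + v.1 (1 + 2) + v.1 (2 + 2) = 0
    rw [show ((0 : Fin 3) + 2) = 2 from rfl, show ((1 : Fin 3) + 2) = 0 from rfl,
      show ((2 : Fin 3) + 2) = 1 from rfl]
    linear_combination h⟩
  map_add' := by intro a b; ext i; rfl
  map_smul' := by intro c a; ext i; rfl

open Module

theorem finrank_ker_sum_proj_add_one {K ι : Type*} [DivisionRing K] [Fintype ι] [Nonempty ι] :
    finrank K (LinearMap.ker (∑ i : ι, LinearMap.proj i : (ι → K) →ₗ[K] K)) + 1 =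
      Fintype.card ι := by
  obtain ⟨i₀⟩ := ‹Nonempty ι›
  classical
  have hne : (∑ i : ι, LinearMap.proj i : (ι → K) →ₗ[K] K) ≠ 0 := fun h => by
    simpa using LinearMap.congr_fun h (Pi.single i₀ 1)
  rw [Dual.finrank_ker_add_one_of_ne_zero hne, finrank_fintype_fun_eq_card]

theorem eq_zero_of_rotate_eq_self {R : Type*} [CommRing R] (h3 : IsUnit (3 : R)) {v : Fin 3 → R}
    (hsum : v 0 + v 1 + v 2 = 0) (hfix : (fun i => v (i + 2)) = v) : v = 0 := by
  have h20 : v 2 = v 0 := congrFun hfix 0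
  have h01 : v 0 = v 1 := congrFun hfix 1
  have h0 : v 0 = 0 := by
    refine h3.mul_right_eq_zero.mp ?_
    linear_combination hsum + h01 - h20
  ext i
  fin_cases i
  · exact h0
  · exact h01 ▸ h0
  · exact h20 ▸ h0

theorem Msub_eq_ker_sum_proj : Msub = LinearMap.ker (∑ i : Fin 3, LinearMap.proj i) := by
  ext v
  simp [Msub, Fin.sum_univ_three]

theorem finrank_Msub : finrank (ZMod 2) Msub = 2 := by
  have := finrank_ker_sum_proj_add_one (K := ZMod 2) (ι := Fin 3)
  rw [← Msub_eq_ker_sum_proj, Fintype.card_fin] at this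
  omega

theorem ker_tmap_sub_id : LinearMap.ker (tmap - LinearMap.id) = ⊥ := by
  rw [LinearMap.ker_eq_bot']
  intro v hv
  have hfix : tmap v = v := sub_eq_zero.mp hv
  exact Subtype.ext (eq_zero_of_rotate_eq_self (by decide) v.2 (congrArg Subtype.val hfix))

theorem range_tmap_sub_id : LinearMap.range (tmap - LinearMap.id) = ⊤ :=
  LinearMap.range_eq_top.mpr <|
    LinearMap.injective_iff_surjective.mp (LinearMap.ker_eq_bot.mp ker_tmap_sub_id)

/-- For `Γ = ℤ` acting on `M = {(x,y,z) ∈ 𝔽₂³ : x+y+z=0}` through the cyclic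
permutation `t`, the group cohomology `Hⁿ(ℤ, M)` vanishes for all `n ≥ 0`
(`H⁰ = ker(t−1) = 0`, `H¹ = coker(t−1) = 0`, and `Hⁿ = 0` for `n ≥ 2` by definition),
while `H⁰(Γ^Θ, M) = M` has `𝔽₂`-dimension `2`; in particular
`dim H⁰(ℤ, M) < dim H⁰(Γ^Θ, M)`. -/
theorem stmt4 :
    LinearMap.ker (tmap - LinearMap.id) = ⊥ ∧
    LinearMap.range (tmap - LinearMap.id) = ⊤ ∧
    Module.finrank (ZMod 2) Msub = 2 ∧
    Module.finrank (ZMod 2) (LinearMap.ker (tmap - LinearMap.id)) <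
      Module.finrank (ZMod 2) Msub := by
  refine ⟨ker_tmap_sub_id, range_tmap_sub_id, finrank_Msub, ?_⟩
  rw [ker_tmap_sub_id, finrank_bot, finrank_Msub]
  norm_num
end
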